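/- arXiv:1807.06478 — 5 statements merged into one kernel-verified Lean document; each statement's English description precedes it below -/
import Mathlib

section
/- Let G be a group acting on a set E by bijections (equivalently, G ≤ Sym(E)), where the support of g is Supp(g) = {x ∈ E : g(x) ≠ x}. Suppose that for all non-identity elements f₁, f₂, f₃ ∈ G there exists f₄ ∈ G such that (S·f₄·f₃) ∩ (S·f₄) = ∅ where S = Supp(f₁) ∪ Supp(f₂). Then the commutator subgroup G' of G is simple (Higman's simplicity criterion). -/
/-! If the supports of `a` and `b` lie in `S` and `k` moves `S` off itself, then `k a k⁻¹`
commutes with `b`, so conjugating `b` by `a` is the same as conjugating it by `⁅a, k⁆ ∈ G'`.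
Higman's hypothesis supplies such a `k` among the conjugates of any nontrivial `h`. Hence every
`G`-conjugate of `h` is a `G'`-conjugate of `h`, so a subgroup normalized by `G'` and containing
`h` contains the normal closure of `h` in `G`; and every commutator `⁅a, b⁆ = ⁅⁅a, k⁆, b⁆` lies in
that normal closure. -/

open Subgroup Group
open scoped commutatorElement

section

variable {G : Type*} [Group G]

theorem conj_eq_commutatorElement_conj_of_commute {a b k : G} (h : Commute (k * a * k⁻¹) b) :
    a * b * a⁻¹ = ⁅a, k⁆ * b * ⁅a, k⁆⁻¹ := by
  have hb : (k * a * k⁻¹)⁻¹ * b * (k * a * k⁻¹) = b := by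
    rw [mul_assoc, ← h.eq, inv_mul_cancel_left]
  calc a * b * a⁻¹ = a * ((k * a * k⁻¹)⁻¹ * b * (k * a * k⁻¹)) * a⁻¹ := by rw [hb]
    _ = ⁅a, k⁆ * b * ⁅a, k⁆⁻¹ := by simp only [commutatorElement_def]; group

variable (hG : ∀ a b h : G, h ≠ 1 → ∃ k, IsConj h k ∧ Commute (k * a * k⁻¹) b)
include hG

theorem commutator_le_normalClosure_singleton {h : G} (hh : h ≠ 1) :
    commutator G ≤ normalClosure {h} := by
  rw [commutator_def, commutator_le]
  intro a _ b _
  obtain ⟨k, hhk, hk⟩ := hG a b h hh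
  have hkC : k ∈ normalClosure {h} :=
    conjugatesOfSet_subset_normalClosure (mem_conjugatesOfSet_iff.2 ⟨h, rfl, hhk⟩)
  have hakC : ⁅a, k⁆ ∈ normalClosure {h} :=
    commutator_le_right _ _ (commutator_mem_commutator (mem_top a) hkC)
  have hab : ⁅a, b⁆ = ⁅⁅a, k⁆, b⁆ := by
    rw [commutatorElement_def, commutatorElement_def ⁅a, k⁆,
      conj_eq_commutatorElement_conj_of_commute hk]
  rw [hab]
  exact commutator_le_left _ _ (commutator_mem_commutator hakC (mem_top b))

theorem normalClosure_singleton_le_of_le_normalizer {M : Subgroup G}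
    (hM : commutator G ≤ normalizer (M : Set G)) {h : G} (hhM : h ∈ M)
    (hh : h ≠ 1) : normalClosure {h} ≤ M := by
  refine (closure_le M).2 fun x hx => ?_
  obtain ⟨_, hmem, hhx⟩ := mem_conjugatesOfSet_iff.1 hx
  rw [Set.mem_singleton_iff.1 hmem] at hhx
  obtain ⟨g, rfl⟩ := isConj_iff.1 hhx
  obtain ⟨k, -, hk⟩ := hG g h h hh
  rw [conj_eq_commutatorElement_conj_of_commute hk]
  exact (mem_normalizer_iff.1 (hM (commutator_mem_commutator (mem_top g) (mem_top k))) h).1 hhM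

theorem eq_bot_or_eq_top_of_normal_of_commutator (N : Subgroup (commutator G)) (hN : N.Normal) :
    N = ⊥ ∨ N = ⊤ := by
  refine N.bot_or_exists_ne_one.imp id fun ⟨h, hhN, hh⟩ => ?_
  set M := N.map (commutator G).subtype
  have hMN : M.subgroupOf (commutator G) = N :=
    comap_map_eq_self_of_injective (commutator G).subtype_injective N
  have hM : commutator G ≤ normalizer (M : Set G) :=
    (normal_subgroupOf_iff_le_normalizer (map_subtype_le N)).1 (by rwa [hMN])
  rw [← hMN, subgroupOf_eq_top]
  exact (commutator_le_normalClosure_singleton hG (by simpa using hh)).trans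
    (normalClosure_singleton_le_of_le_normalizer hG hM (mem_map_of_mem _ hhN) (by simpa using hh))

end

namespace Equiv.Perm

variable {α : Type*}

theorem conj_mapsTo_compl_of_image_inter_eq_empty {f g : Perm α} {S : Set α}
    (h : ⇑f '' (⇑g '' S) ∩ ⇑g '' S = ∅) : Set.MapsTo ⇑(g⁻¹ * f * g) S Sᶜ := by
  intro x hx hxS
  refine Set.eq_empty_iff_forall_notMem.1 h (f (g x)) ⟨⟨g x, ⟨x, hx, rfl⟩, rfl⟩, ⟨_, hxS, ?_⟩⟩
  simp

theorem commute_conj_of_mapsTo_compl {a b k : Perm α} {S : Set α}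
    (ha : {x | a x ≠ x} ⊆ S) (hb : {x | b x ≠ x} ⊆ S) (hk : Set.MapsTo k S Sᶜ) :
    Commute (k * a * k⁻¹) b := by
  refine Disjoint.commute fun x => or_iff_not_imp_right.2 fun hbx => ?_
  have hax : a (k⁻¹ x) = k⁻¹ x := by
    by_contra hax
    exact hk (ha hax) (by simpa using hb hbx)
  rw [mul_apply, mul_apply, hax]
  exact k.apply_symm_apply x

end Equiv.Perm

/-- Higman's simplicity criterion: if `G` is a group of bijections of a set `E`
such that for all nonidentity `f₁ f₂ f₃ ∈ G` there is `f₄ ∈ G` with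
`(S·f₄·f₃) ∩ (S·f₄) = ∅` where `S = Supp f₁ ∪ Supp f₂`, then the commutator
subgroup of `G` is simple (every normal subgroup is trivial or everything). -/
theorem higman_simplicity_criterion {E : Type*} (G : Subgroup (Equiv.Perm E))
    (hyp : ∀ f₁ f₂ f₃ : Equiv.Perm E, f₁ ∈ G → f₂ ∈ G → f₃ ∈ G →
      f₁ ≠ 1 → f₂ ≠ 1 → f₃ ≠ 1 →
      ∃ f₄ ∈ G,
        (⇑f₃ '' (⇑f₄ '' ({x | f₁ x ≠ x} ∪ {x | f₂ x ≠ x}))) ∩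
          (⇑f₄ '' ({x | f₁ x ≠ x} ∪ {x | f₂ x ≠ x})) = ∅) :
    ∀ N : Subgroup ↥(commutator ↥G), N.Normal → N = ⊥ ∨ N = ⊤ := by
  refine eq_bot_or_eq_top_of_normal_of_commutator fun a b h hh => ?_
  by_cases ha : a = 1
  · exact ⟨h, .refl h, by simp [ha]⟩
  by_cases hb : b = 1
  · exact ⟨h, .refl h, by simp [hb]⟩
  obtain ⟨f, hfG, hf⟩ := hyp a b h a.2 b.2 h.2 (by simpa using ha) (by simpa using hb)
    (by simpa using hh)
  refine ⟨⟨f, hfG⟩⁻¹ * h * ⟨f, hfG⟩, isConj_iff.2 ⟨⟨f, hfG⟩⁻¹, by group⟩, Subtype.ext ?_⟩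
  exact (Equiv.Perm.commute_conj_of_mapsTo_compl Set.subset_union_left Set.subset_union_right
    (Equiv.Perm.conj_mapsTo_compl_of_image_inter_eq_empty hf)).eq
end

section
/- Let ρ : (1/2)ℤ → {a, b, a⁻¹, b⁻¹} be a labelling, i.e. ρ(k) ∈ {a, a⁻¹} for k ∈ ℤ and ρ(k) ∈ {b, b⁻¹} for k ∈ (1/2)ℤ \ ℤ. Then for every permissible word w₁⋯w_m (m odd, w_i ∈ {a,a⁻¹} for odd i and w_i ∈ {b,b⁻¹} for even i) there exists a quasi-periodic labelling ρ and a block X ⊆ (1/2)ℤ such that the word read off along X equals w₁⋯w_m. -/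
/-- The four-letter alphabet `{a, b, a⁻¹, b⁻¹}`. -/
inductive Letter : Type
  | a : Letter
  | ainv : Letter
  | b : Letter
  | binv : Letter

/-- Formal inverse of a letter. -/
def Letter.inv : Letter → Letter
  | .a => .ainv
  | .ainv => .a
  | .b => .binv
  | .binv => .b

/-- A labelling of `½ℤ` (modelled by `ℤ` after rescaling by 2): `a`-letters on even
integers (corresponding to `ℤ`), `b`-letters on odd integers (corresponding to
`½ℤ \ ℤ`). -/
def IsLabelling (ρ : ℤ → Letter) : Prop :=
  ∀ k : ℤ, (Even k → ρ k = Letter.a ∨ ρ k = Letter.ainv) ∧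
    (Odd k → ρ k = Letter.b ∨ ρ k = Letter.binv)

/-- A labelling is quasi-periodic if (1) for every block the word it reads occurs
as a subword of the word read along any sufficiently long block, and (2) the formal
inverse of the word along any block is realized along some block. -/
def QuasiPeriodic (ρ : ℤ → Letter) : Prop :=
  IsLabelling ρ ∧
  (∀ (k : ℤ) (l : ℕ), ∃ n : ℕ, ∀ (k' : ℤ) (m : ℕ), n ≤ m →
      ∃ j : ℤ, k' ≤ j ∧ j + l ≤ k' + m - 1 ∧ ∀ i : ℕ, i ≤ l → ρ (j + i) = ρ (k + i)) ∧
  (∀ (k : ℤ) (l : ℕ), ∃ j : ℤ, ∀ i : ℕ, i ≤ l →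
      ρ (j + i) = (ρ (k + ((l - i : ℕ) : ℤ))).inv)

/-! Let `A₀ = w₁⋯w_m` and `A_{n+1} = A_n b Ā_n b⁻¹ A_n`, where `Ā` is the formal inverse of `A`;
then `Ā_{n+1} = Ā_n b A_n b⁻¹ Ā_n`, and each `A_n` is a prefix of the next. The labelling `ρ`
reads `Ā_n b A_n` around position `-1` for every `n`. Cutting `ℤ` into consecutive blocks of
length `|A_n|` separated by single positions, every block reads `A_n` or `Ā_n`, since each block
of level `n + 1` splits into three blocks of level `n`. A block of `ρ` lies in some `Ā_M b A_M`,
which occurs in both `A_{M+2}` and `Ā_{M+2}`: so it occurs in every window long enough to contain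
a block of level `M + 2`, and its formal inverse occurs in `Ā_{M+2}`. The letters of `A_n`
alternate between `a`-letters and `b`-letters and `|A_n|` is odd, so `ρ` is a labelling. -/

namespace Letter

@[simp] lemma inv_inv (c : Letter) : c.inv.inv = c := by cases c <;> rfl

def isB : Letter → Bool
  | .a | .ainv => false
  | .b | .binv => true

@[simp] lemma isB_inv (c : Letter) : c.inv.isB = c.isB := by cases c <;> rfl

end Letter

section Window

variable {α : Type*} (ρ : ℤ → α)

def window (p : ℤ) (n : ℕ) : List α := (List.range n).map fun i : ℕ => ρ (p + i)

@[simp] lemma length_window (p : ℤ) (n : ℕ) : (window ρ p n).length = n := by simp [window]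

@[simp] lemma getElem_window (p : ℤ) (n i : ℕ) (h : i < (window ρ p n).length) :
    (window ρ p n)[i] = ρ (p + i) := by simp [window]

lemma window_add (p : ℤ) (a b : ℕ) :
    window ρ p (a + b) = window ρ p a ++ window ρ (p + a) b := by
  simp [window, List.range_add, add_assoc]

def Reads (p : ℤ) (v : List α) : Prop := window ρ p v.length = v

variable {ρ}

lemma reads_iff {p : ℤ} {v : List α} :
    Reads ρ p v ↔ ∀ (i : ℕ) (h : i < v.length), ρ (p + i) = v[i] := by
  simp [Reads, List.ext_getElem_iff]

lemma reads_window_iff {j k : ℤ} {n : ℕ} :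
    Reads ρ j (window ρ k n) ↔ ∀ i < n, ρ (j + i) = ρ (k + i) := by
  simp [reads_iff]

lemma reads_append {p : ℤ} {x y : List α} :
    Reads ρ p (x ++ y) ↔ Reads ρ p x ∧ Reads ρ (p + x.length) y := by
  rw [Reads, List.length_append, window_add]
  refine ⟨fun h => List.append_inj h (length_window ..), fun h => ?_⟩
  rw [← h.1, ← h.2, length_window, length_window]

lemma reads_cons {p : ℤ} {c : α} {v : List α} :
    Reads ρ p (c :: v) ↔ ρ p = c ∧ Reads ρ (p + 1) v := by
  rw [← List.singleton_append, reads_append]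
  simp [reads_iff]

lemma Reads.window_infix {p k : ℤ} {n : ℕ} {v : List α} (h : Reads ρ p v) (hk : p ≤ k)
    (hn : k + n ≤ p + v.length) : window ρ k n <:+: v := by
  obtain ⟨a, rfl⟩ : ∃ a : ℕ, k = p + a := ⟨(k - p).toNat, by omega⟩
  obtain ⟨b, hb⟩ : ∃ b : ℕ, v.length = a + n + b := ⟨v.length - a - n, by omega⟩
  refine ⟨window ρ p a, window ρ (p + a + n) b, ?_⟩
  rw [← h, hb, window_add, window_add, Nat.cast_add, add_assoc]

lemma Reads.exists_of_infix {p : ℤ} {v w : List α} (h : Reads ρ p v) (hw : w <:+: v) :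
    ∃ j, p ≤ j ∧ j + w.length ≤ p + v.length ∧ Reads ρ j w := by
  obtain ⟨s, t, rfl⟩ := hw
  exact ⟨p + s.length, by omega, by simp; omega, (reads_append.1 (reads_append.1 h).1).2⟩

end Window

section Words

def wordInv (v : List Letter) : List Letter := (v.map Letter.inv).reverse

@[simp] lemma length_wordInv (v : List Letter) : (wordInv v).length = v.length := by
  simp [wordInv]

lemma getElem_wordInv (v : List Letter) (i : ℕ) (h : i < (wordInv v).length) :
    (wordInv v)[i] = (v[v.length - 1 - i]'(by simp at h; omega)).inv := by
  simp [wordInv, List.getElem_reverse]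

@[simp] lemma wordInv_append (x y : List Letter) : wordInv (x ++ y) = wordInv y ++ wordInv x := by
  simp [wordInv]

@[simp] lemma wordInv_cons (c : Letter) (x : List Letter) :
    wordInv (c :: x) = wordInv x ++ [c.inv] := by
  simp [wordInv]

@[simp] lemma wordInv_wordInv (v : List Letter) : wordInv (wordInv v) = v := by
  simp [wordInv, List.map_reverse, Function.comp_def]

lemma List.IsInfix.wordInv {x y : List Letter} (h : x <:+: y) : wordInv x <:+: wordInv y :=
  (h.map Letter.inv).reverse

def expand (x : List Letter) : List Letter := x ++ .b :: (wordInv x ++ .binv :: x)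

lemma length_expand (x : List Letter) : (expand x).length + 1 = 3 * (x.length + 1) := by
  simp [expand]; ring

lemma wordInv_expand (x : List Letter) :
    wordInv (expand x) = wordInv x ++ .b :: (x ++ .binv :: wordInv x) := by
  simp [expand, Letter.inv]

lemma wordInv_infix_expand (x : List Letter) : wordInv x <:+: expand x :=
  ⟨x ++ [.b], .binv :: x, by simp [expand]⟩

def blockWord (u : List Letter) (n : ℕ) : List Letter := expand^[n] u

@[simp] lemma blockWord_zero (u : List Letter) : blockWord u 0 = u := rfl

lemma blockWord_succ (u : List Letter) (n : ℕ) :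
    blockWord u (n + 1) = expand (blockWord u n) :=
  Function.iterate_succ_apply' ..

lemma length_blockWord (u : List Letter) (n : ℕ) :
    (blockWord u n).length + 1 = 3 ^ n * (u.length + 1) := by
  induction n with
  | zero => simp
  | succ n ih => rw [blockWord_succ, length_expand, ih]; ring

lemma blockWord_prefix (u : List Letter) {n N : ℕ} (h : n ≤ N) :
    blockWord u n <+: blockWord u N := by
  induction N, h using Nat.le_induction with
  | base => exact List.prefix_refl _
  | succ N _ ih => exact ih.trans (by rw [blockWord_succ]; exact List.prefix_append _ _)

end Words

lemma Reads.of_append_cons_append_cons {α : Type*} {ρ : ℤ → α} {p : ℤ} {x y z : List α}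
    {c c' : α} (hy : y.length = x.length) (h : Reads ρ p (x ++ c :: (y ++ c' :: z))) :
    Reads ρ p x ∧ Reads ρ (p + (x.length + 1)) y ∧ Reads ρ (p + 2 * (x.length + 1)) z := by
  simp only [reads_append, reads_cons] at h
  obtain ⟨hx, -, hy', -, hz⟩ := h
  refine ⟨hx, by rwa [← add_assoc], ?_⟩
  rwa [show p + ↑x.length + 1 + ↑y.length + 1 = p + 2 * (x.length + 1) by omega] at hz

def ReadsUpToInv (ρ : ℤ → Letter) (p : ℤ) (v : List Letter) : Prop :=
  Reads ρ p v ∨ Reads ρ p (wordInv v)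

lemma ReadsUpToInv.of_expand {ρ : ℤ → Letter} {p : ℤ} {x : List Letter}
    (h : ReadsUpToInv ρ p (expand x)) {r : ℕ} (hr : r < 3) :
    ReadsUpToInv ρ (p + r * (x.length + 1)) x := by
  rcases h with h | h
  · obtain ⟨h₀, h₁, h₂⟩ := h.of_append_cons_append_cons (length_wordInv x)
    interval_cases r
    · simpa [ReadsUpToInv] using Or.inl h₀
    · simpa [ReadsUpToInv] using Or.inr h₁
    · simpa [ReadsUpToInv] using Or.inl h₂
  · rw [wordInv_expand] at h
    obtain ⟨h₀, h₁, h₂⟩ := h.of_append_cons_append_cons (by simp)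
    rw [length_wordInv] at h₁ h₂
    interval_cases r
    · simpa [ReadsUpToInv] using Or.inr h₀
    · simpa [ReadsUpToInv] using Or.inl h₁
    · simpa [ReadsUpToInv] using Or.inr h₂

section Labelling

variable (u : List Letter)

/-- Level `i + 1` is already long enough to contain position `i`. -/
def limitLetter (i : ℕ) : Letter := (blockWord u (i + 1)).getD i .a

/-- Reads `blockWord u n` from position `0` on and its formal inverse up to position `-2`,
separated by `b` at position `-1`. -/
def labelling : ℤ → Letter
  | Int.ofNat i => limitLetter u i
  | Int.negSucc 0 => .b
  | Int.negSucc (i + 1) => (limitLetter u i).inv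

variable {u}

lemma lt_length_blockWord_add_one (n : ℕ) : n < (blockWord u n).length + 1 := by
  have := Nat.lt_pow_self (n := n) (show 1 < 3 by norm_num)
  rw [length_blockWord]
  nlinarith

lemma getElem_blockWord {n i : ℕ} (h : i < (blockWord u n).length) :
    (blockWord u n)[i] = limitLetter u i := by
  have hi := lt_length_blockWord_add_one (u := u) (i + 1)
  rw [limitLetter, List.getD_eq_getElem _ _ (by omega)]
  rcases le_total n (i + 1) with hn | hn
  · exact (blockWord_prefix u hn).getElem h
  · exact ((blockWord_prefix u hn).getElem _).symm

lemma reads_labelling_zero (n : ℕ) : Reads (labelling u) 0 (blockWord u n) := by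
  rw [reads_iff]
  intro i h
  rw [zero_add, getElem_blockWord h]
  rfl

lemma reads_labelling_neg (n : ℕ) :
    Reads (labelling u) (-((blockWord u n).length + 1)) (wordInv (blockWord u n)) := by
  rw [reads_iff]
  intro i h
  rw [length_wordInv] at h
  rw [getElem_wordInv, getElem_blockWord,
    show -(((blockWord u n).length : ℤ) + 1) + i
      = Int.negSucc ((blockWord u n).length - 1 - i + 1) by rw [Int.negSucc_eq]; omega]
  rfl

lemma reads_labelling_center (n : ℕ) : Reads (labelling u) (-((blockWord u n).length + 1))
    (wordInv (blockWord u n) ++ .b :: blockWord u n) := by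
  refine reads_append.2 ⟨reads_labelling_neg n, reads_cons.2 ⟨?_, ?_⟩⟩
  · rw [length_wordInv, show -(((blockWord u n).length : ℤ) + 1) + (blockWord u n).length
      = Int.negSucc 0 by rw [Int.negSucc_eq]; omega]
    rfl
  · rw [length_wordInv, show -(((blockWord u n).length : ℤ) + 1) + (blockWord u n).length + 1
      = 0 by ring]
    exact reads_labelling_zero n

/-- The blocks of level `n` at `0` and `-1` read `blockWord u n` and its inverse, and a block of
level `n + 1` at `q` consists of the blocks of level `n` at `3q`, `3q + 1`, `3q + 2`. -/
lemma readsUpToInv_labelling (n : ℕ) (q : ℤ) :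
    ReadsUpToInv (labelling u) (q * ((blockWord u n).length + 1)) (blockWord u n) := by
  suffices h : ∀ j n (q : ℤ), -3 ^ j ≤ q → q < 3 ^ j →
      ReadsUpToInv (labelling u) (q * ((blockWord u n).length + 1)) (blockWord u n) by
    have : (q.natAbs : ℤ) < 3 ^ q.natAbs := by exact_mod_cast Nat.lt_pow_self (by norm_num)
    exact h q.natAbs n q (by omega) (by omega)
  intro j
  induction j with
  | zero =>
    intro n q hq₁ hq₂
    obtain rfl | rfl : q = 0 ∨ q = -1 := by omega
    · exact .inl (by simpa using reads_labelling_zero n)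
    · exact .inr (by simpa using reads_labelling_neg n)
  | succ j ih =>
    intro n q hq₁ hq₂
    have h := ih (n + 1) (q / 3) (by omega) (by omega)
    have hlen : ((expand (blockWord u n)).length : ℤ) + 1 = 3 * ((blockWord u n).length + 1) :=
      mod_cast length_expand _
    rw [blockWord_succ, hlen] at h
    convert h.of_expand (r := (q % 3).toNat) (by omega) using 1
    rw [Int.toNat_of_nonneg (by omega)]
    linear_combination (-((blockWord u n).length + 1) : ℤ) * Int.emod_add_mul_ediv q 3

lemma exists_infix_blockWord (k : ℤ) (l : ℕ) :
    ∃ N, window (labelling u) k l <:+: blockWord u N ∧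
      window (labelling u) k l <:+: wordInv (blockWord u N) := by
  set M := k.natAbs + l
  have hM := lt_length_blockWord_add_one (u := u) M
  have hcenter : window (labelling u) k l <:+: wordInv (blockWord u (M + 1)) := by
    refine ((reads_labelling_center M).window_infix (by omega) (by simp; omega)).trans ?_
    rw [blockWord_succ, wordInv_expand]
    exact ⟨[], .binv :: wordInv (blockWord u M), by simp⟩
  refine ⟨M + 2, hcenter.trans ?_, hcenter.trans ?_⟩
  · rw [blockWord_succ u (M + 1)]
    exact wordInv_infix_expand _
  · rw [blockWord_succ u (M + 1), wordInv_expand]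
    exact (List.prefix_append _ _).isInfix

lemma labelling_recurrent (k : ℤ) (l : ℕ) : ∃ n : ℕ, ∀ (k' : ℤ) (m : ℕ), n ≤ m →
    ∃ j : ℤ, k' ≤ j ∧ j + l ≤ k' + m - 1 ∧
      ∀ i : ℕ, i ≤ l → labelling u (j + i) = labelling u (k + i) := by
  obtain ⟨N, h, h'⟩ := exists_infix_blockWord (u := u) k (l + 1)
  -- a window of length `2 * (L + 1)` contains an aligned block of level `N`
  obtain ⟨L, hL⟩ : ∃ L : ℕ, (blockWord u N).length = L := ⟨_, rfl⟩
  refine ⟨2 * (L + 1), fun k' m hm => ?_⟩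
  set q := k' / (L + 1) + 1
  have hq : k' < q * (L + 1) ∧ q * (L + 1) ≤ k' + (L + 1) := by
    have := Int.emod_add_mul_ediv k' (L + 1)
    have := Int.emod_nonneg k' (b := L + 1) (by omega)
    have := Int.emod_lt_of_pos k' (b := L + 1) (by omega)
    constructor <;> nlinarith
  obtain ⟨j, hj₁, hj₂, hj⟩ : ∃ j, q * (L + 1) ≤ j ∧ j + (l + 1) ≤ q * (L + 1) + L ∧
      Reads (labelling u) j (window (labelling u) k (l + 1)) := by
    rcases hL ▸ readsUpToInv_labelling N q with hr | hr
    · simpa [hL] using hr.exists_of_infix h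
    · simpa [hL] using hr.exists_of_infix h'
  exact ⟨j, by omega, by omega, fun i hi => reads_window_iff.1 hj i (by omega)⟩

lemma labelling_inv_closed (k : ℤ) (l : ℕ) : ∃ j : ℤ, ∀ i : ℕ, i ≤ l →
    labelling u (j + i) = (labelling u (k + ((l - i : ℕ) : ℤ))).inv := by
  obtain ⟨N, h, -⟩ := exists_infix_blockWord (u := u) k (l + 1)
  obtain ⟨j, -, -, hj⟩ := (reads_labelling_neg N).exists_of_infix h.wordInv
  refine ⟨j, fun i hi => ?_⟩
  rw [reads_iff] at hj
  have := hj i (by simp; omega)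
  rw [getElem_wordInv] at this
  simpa using this

end Labelling

lemma isLabelling_iff {ρ : ℤ → Letter} : IsLabelling ρ ↔ ∀ k, ((ρ k).isB ↔ Odd k) := by
  refine forall_congr' fun k => ?_
  rcases Int.even_or_odd k with hk | hk
  · have := Int.not_odd_iff_even.2 hk
    cases ρ k <;> simp [Letter.isB, hk, this]
  · have := Int.not_even_iff_odd.2 hk
    cases ρ k <;> simp [Letter.isB, hk, this]

def Alternating (v : List Letter) : Prop := ∀ (i : ℕ) (h : i < v.length), (v[i].isB ↔ Odd i)

lemma Alternating.append_cons {x y : List Letter} {c : Letter} (hx : Alternating x)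
    (hodd : Odd x.length) (hc : c.isB) (hy : Alternating y) : Alternating (x ++ c :: y) := by
  intro i h
  rw [List.getElem_append]
  split_ifs with hi
  · exact hx i hi
  · rw [List.getElem_cons]
    split_ifs with hi'
    · simp only [hc, true_iff]
      rwa [show i = x.length by omega]
    · rw [hy _ (by simp at h; omega)]
      simp only [Nat.odd_iff] at hodd ⊢
      omega

lemma Alternating.wordInv {x : List Letter} (hx : Alternating x) (hodd : Odd x.length) :
    Alternating (wordInv x) := by
  intro i h
  rw [length_wordInv] at h
  rw [getElem_wordInv, Letter.isB_inv, hx _ (by omega)]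
  simp only [Nat.odd_iff] at hodd ⊢
  omega

lemma odd_length_expand {x : List Letter} (hodd : Odd x.length) : Odd (expand x).length := by
  have := length_expand x
  simp only [Nat.odd_iff] at hodd ⊢
  omega

lemma Alternating.expand {x : List Letter} (hx : Alternating x) (hodd : Odd x.length) :
    Alternating (expand x) :=
  hx.append_cons hodd rfl <| (hx.wordInv hodd).append_cons (by simpa using hodd) rfl hx

lemma alternating_blockWord {u : List Letter} (hu : Alternating u) (hodd : Odd u.length) (n : ℕ) :
    Alternating (blockWord u n) ∧ Odd (blockWord u n).length := by
  induction n with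
  | zero => exact ⟨hu, hodd⟩
  | succ n ih =>
    rw [blockWord_succ]
    exact ⟨ih.1.expand ih.2, odd_length_expand ih.2⟩

lemma isLabelling_labelling {u : List Letter} (hu : Alternating u) (hodd : Odd u.length) :
    IsLabelling (labelling u) := by
  rw [isLabelling_iff]
  intro t
  obtain ⟨hM, hMo⟩ := alternating_blockWord hu hodd (t.natAbs + 1)
  set L := (blockWord u (t.natAbs + 1)).length
  have hL := lt_length_blockWord_add_one (u := u) (t.natAbs + 1)
  have ht : -(L + 1 : ℤ) + (t + L + 1).toNat = t := by omega
  have hcenter := reads_iff.1 (reads_labelling_center (u := u) (t.natAbs + 1))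
    (t + L + 1).toNat (by simp; omega)
  rw [ht] at hcenter
  rw [hcenter, (hM.wordInv hMo).append_cons (by simpa using hMo) rfl hM]
  simp only [Nat.odd_iff, Int.odd_iff] at hMo ⊢
  omega

/-- Every permissible word is realized along a block of some quasi-periodic
labelling. -/
theorem exists_quasiPeriodic_labelling (m : ℕ) (hm : Odd m) (w : ℕ → Letter)
    (hperm : ∀ i < m, (Even i → w i = Letter.a ∨ w i = Letter.ainv) ∧
      (Odd i → w i = Letter.b ∨ w i = Letter.binv)) :
    ∃ (ρ : ℤ → Letter) (k : ℤ), QuasiPeriodic ρ ∧ ∀ i : ℕ, i < m → ρ (k + i) = w i := by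
  set u := (List.range m).map w
  have hu : Alternating u := by
    intro i hi
    simp only [u, List.length_map, List.length_range] at hi
    simp only [u, List.getElem_map, List.getElem_range]
    rcases Nat.even_or_odd i with hi' | hi'
    · rcases (hperm i hi).1 hi' with h | h <;> simp [h, Letter.isB, Nat.not_odd_iff_even.2 hi']
    · rcases (hperm i hi).2 hi' with h | h <;> simp [h, Letter.isB, hi']
  refine ⟨labelling u, 0, ⟨isLabelling_labelling hu (by simpa [u]), labelling_recurrent,
    labelling_inv_closed⟩, fun i hi => ?_⟩
  simpa [u] using reads_iff.1 (reads_labelling_zero (u := u) 0) i (by simpa [u])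
end

section
/- Let f, g be orientation-preserving homeomorphisms of ℝ such that the set of points where f is not differentiable is discrete, and similarly for g, and such that every non-trivial affine map of ℝ has at most one fixed point. If f and g commute and x is a boundary point of Supp(g) contained in an open interval J on which f has no fixed point (f moves every point of J), and the orbit {x·fⁿ : n ∈ ℤ} accumulates at a point of ℝ, then the set of boundary points of Supp(g) (transition points of g) is not discrete. Consequently, if the transition points of g form a discrete subset of ℝ, then f and g do not commute. -/
/-! Since `f` commutes with `g`, it preserves the support of `g` and hence, being a homeomorphism,
its frontier, the set of transition points of `g`. So the whole `f`-orbit of the transition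
point `x` consists of transition points, and an accumulation point of the orbit is an
accumulation point of this set. A closed discrete set has no accumulation points. -/

open Filter Set Topology

theorem preimage_setOf_apply_ne_self_of_commute {α : Type*} {f g : α → α}
    (hf : Function.Injective f) (hcomm : ∀ y, f (g y) = g (f y)) :
    f ⁻¹' {y | g y ≠ y} = {y | g y ≠ y} := by
  ext y
  simp only [mem_preimage, mem_ofPred_eq, ← hcomm, hf.ne_iff]

theorem Homeomorph.preimage_frontier_setOf_apply_ne_self_of_commute {X : Type*}
    [TopologicalSpace X] {f g : X ≃ₜ X} (hcomm : ∀ y, f (g y) = g (f y)) :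
    f ⁻¹' frontier {y | g y ≠ y} = frontier {y | g y ≠ y} := by
  rw [f.preimage_frontier, preimage_setOf_apply_ne_self_of_commute f.injective hcomm]

theorem Equiv.Perm.zpow_apply_mem_of_preimage_eq {α : Type*} {f : Equiv.Perm α} {s : Set α}
    (hs : f ⁻¹' s = s) {x : α} (hx : x ∈ s) (n : ℤ) : (f ^ n) x ∈ s := by
  have hbij : BijOn f s s := by simpa only [hs] using f.bijective.bijOn_preimage (t := s)
  exact (hbij.perm_zpow n).mapsTo hx

theorem IsClosed.not_accPt_of_discreteTopology {X : Type*} [TopologicalSpace X] {s : Set X}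
    (hs : IsClosed s) [DiscreteTopology s] (p : X) : ¬ AccPt p (𝓟 s) := by
  rw [AccPt, not_neBot, ← disjoint_iff]
  exact isClosed_and_discrete_iff.mp ⟨hs, isDiscrete_iff_discreteTopology.mpr ‹_›⟩ p

theorem transition_points_not_discrete_of_commuting_general (f g : ℝ ≃ₜ ℝ)
    (hcomm : ∀ y : ℝ, f (g y) = g (f y))
    (x : ℝ) (hx : x ∈ frontier {y : ℝ | g y ≠ y})
    (hacc : ∃ p : ℝ, AccPt p
      (Filter.principal {y : ℝ | ∃ n : ℤ, y = ((f.toEquiv : Equiv.Perm ℝ) ^ n) x})) :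
    ¬ DiscreteTopology ↥(frontier {y : ℝ | g y ≠ y}) := by
  intro hdisc
  obtain ⟨p, hp⟩ := hacc
  have hinv := f.preimage_frontier_setOf_apply_ne_self_of_commute hcomm
  have horbit : {y : ℝ | ∃ n : ℤ, y = ((f.toEquiv : Equiv.Perm ℝ) ^ n) x}
      ⊆ frontier {y : ℝ | g y ≠ y} := by
    rintro _ ⟨n, rfl⟩
    exact Equiv.Perm.zpow_apply_mem_of_preimage_eq hinv hx n
  exact isClosed_frontier.not_accPt_of_discreteTopology p (hp.mono (principal_mono.mpr horbit))

/-- If `f` and `g` are commuting homeomorphisms of `ℝ` (with discrete sets of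
non-differentiability points), `x` is a transition point of `g` lying in an open
interval on which `f` moves every point, and the `f`-orbit of `x` accumulates in
`ℝ`, then the set of transition points of `g` is not discrete. -/
theorem transition_points_not_discrete_of_commuting (f g : ℝ ≃ₜ ℝ)
    (hfd : DiscreteTopology {y : ℝ | ¬ DifferentiableAt ℝ (⇑f) y})
    (hgd : DiscreteTopology {y : ℝ | ¬ DifferentiableAt ℝ (⇑g) y})
    (hcomm : ∀ y : ℝ, f (g y) = g (f y))
    (x : ℝ) (hx : x ∈ frontier {y : ℝ | g y ≠ y})
    (J : Set ℝ) (hJopen : IsOpen J) (hxJ : x ∈ J) (hmove : ∀ y ∈ J, f y ≠ y)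
    (hacc : ∃ p : ℝ, AccPt p
      (Filter.principal {y : ℝ | ∃ n : ℤ, y = ((f.toEquiv : Equiv.Perm ℝ) ^ n) x})) :
    ¬ DiscreteTopology ↥(frontier {y : ℝ | g y ≠ y}) :=
  transition_points_not_discrete_of_commuting_general f g hcomm x hx hacc
end

section
/- A simple group that is bi-orderable (admits a total order invariant under both left and right multiplication) and non-trivial cannot be finitely generated. Equivalently, every finitely generated non-trivial bi-orderable group has a proper non-trivial normal subgroup. -/
set_option linter.unusedSectionVars false

section Aux

variable {G : Type*} [Group G] [LinearOrder G]
    [CovariantClass G G (· * ·) (· ≤ ·)]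
    [CovariantClass G G (Function.swap (· * ·)) (· ≤ ·)]

private lemma my_mul_lt_right {a b : G} (h : a < b) (c : G) : a * c < b * c :=
  (mul_le_mul_left h.le c).lt_of_ne fun he => h.ne (mul_right_cancel he)

private lemma my_mul_lt_left {a b : G} (h : a < b) (c : G) : c * a < c * b :=
  (mul_le_mul_right h.le c).lt_of_ne fun he => h.ne (mul_left_cancel he)

private lemma my_mul_lt_of_lt_of_le {a b c d : G} (h₁ : a < b) (h₂ : c ≤ d) :
    a * c < b * d :=
  (mul_le_mul_right h₂ a).trans_lt (my_mul_lt_right h₁ d)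

/-- floor approximation by powers of `t`, given archimedean property. -/
private lemma my_floor
    (harch : ∀ x : G, 1 < x → ∀ y : G, ∃ n : ℕ, y < x ^ n)
    {t : G} (ht : 1 < t) {z : G} (hz : 1 ≤ z) :
    ∃ p : ℕ, t ^ p ≤ z ∧ z < t ^ (p + 1) := by
  obtain ⟨n, hn⟩ := harch t ht z
  have hP : ∃ m : ℕ, z < t ^ m := ⟨n, hn⟩
  classical
  have hN : z < t ^ Nat.find hP := Nat.find_spec hP
  have hN0 : Nat.find hP ≠ 0 := by
    intro h0
    rw [h0, pow_zero] at hN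
    exact absurd hN (not_lt.2 hz)
  obtain ⟨p, hp⟩ := Nat.exists_eq_succ_of_ne_zero hN0
  refine ⟨p, ?_, by rw [← Nat.succ_eq_add_one, ← hp]; exact hN⟩
  have := Nat.find_min hP (m := p) (by omega)
  exact not_lt.1 this

/-- The Hölder-style contradiction: an archimedean biordered group has no
noncommuting pair of positive elements. -/
private lemma holder_contra {a b : G} (ha : 1 < a) (hb : 1 < b) (hlt : a * b < b * a)
    (harch : ∀ x : G, 1 < x → ∀ y : G, ∃ n : ℕ, y < x ^ n) : False := by
  set c := b * a * (a * b)⁻¹ with hcdef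
  have hc : 1 < c := by
    have h1 := my_mul_lt_right hlt (a * b)⁻¹
    rwa [mul_inv_cancel] at h1
  -- key bound : c < t * t for every t > 1
  have kb : ∀ t : G, 1 < t → c < t * t := by
    intro t ht
    obtain ⟨p, hp1, hp2⟩ := my_floor harch ht ha.le
    obtain ⟨q, hq1, hq2⟩ := my_floor harch ht hb.le
    have h1 : t ^ (p + q) ≤ a * b := by
      rw [pow_add]; exact mul_le_mul' hp1 hq1
    have h2 : b * a < t ^ (q + 1) * t ^ (p + 1) := my_mul_lt_of_lt_of_le hq2 hp2.le
    have h3 : c < (t ^ (q + 1) * t ^ (p + 1)) * (t ^ (p + q))⁻¹ :=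
      my_mul_lt_of_lt_of_le h2 (inv_le_inv_iff.2 h1)
    have h4 : (t ^ (q + 1) * t ^ (p + 1)) * (t ^ (p + q))⁻¹ = t * t := by
      rw [← pow_add, show q + 1 + (p + 1) = 2 + (p + q) by omega, pow_add,
        mul_inv_cancel_right, pow_two]
    rwa [h4] at h3
  by_cases hmin : ∃ t : G, 1 < t ∧ ∀ x : G, 1 < x → t ≤ x
  · obtain ⟨t, ht, hle⟩ := hmin
    have hpow : ∀ z : G, 1 < z → ∃ p : ℕ, z = t ^ p := by
      intro z hz
      obtain ⟨p, h1, h2⟩ := my_floor harch ht hz.le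
      rcases h1.lt_or_eq with hlt' | heq
      · exfalso
        have h3 : 1 < z * (t ^ p)⁻¹ := by
          have := my_mul_lt_right hlt' (t ^ p)⁻¹
          rwa [mul_inv_cancel] at this
        have h4 := hle _ h3
        have h5 : t * t ^ p ≤ z := by
          have := mul_le_mul_left h4 (t ^ p)
          rwa [inv_mul_cancel_right] at this
        rw [← pow_succ'] at h5
        exact absurd h2 (not_lt.2 h5)
      · exact ⟨p, heq.symm⟩
    obtain ⟨p, hp⟩ := hpow a ha
    obtain ⟨q, hq⟩ := hpow b hb
    rw [hp, hq, ← pow_add, ← pow_add, add_comm] at hlt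
    exact lt_irrefl _ hlt
  · push_neg at hmin
    obtain ⟨x, hx1, hx2⟩ := hmin c hc
    obtain ⟨y, hy1, hy2⟩ := hmin x hx1
    have hxc : x < c := hx2
    have hyx : y < x := hy2
    have hm1 : 1 < min y (y⁻¹ * x) := by
      refine lt_min hy1 ?_
      have := my_mul_lt_left hyx y⁻¹
      rwa [inv_mul_cancel] at this
    have hmm : min y (y⁻¹ * x) * min y (y⁻¹ * x) ≤ x := by
      have := mul_le_mul' (min_le_left y (y⁻¹ * x)) (min_le_right y (y⁻¹ * x))
      rwa [mul_inv_cancel_left] at this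
    exact lt_irrefl c ((kb _ hm1).trans_le (hmm.trans hxc.le))

end Aux

/-- A nontrivial simple bi-orderable group cannot be finitely generated. -/
theorem simple_biorderable_not_fg (G : Type*) [Group G] [LinearOrder G]
    [CovariantClass G G (· * ·) (· ≤ ·)]
    [CovariantClass G G (Function.swap (· * ·)) (· ≤ ·)]
    [IsSimpleGroup G] : ¬ Group.FG G := by
  intro hfg
  classical
  obtain ⟨Sset, hclos, hfin⟩ := Group.fg_iff.1 hfg
  set T : Finset G := insert (1 : G) (hfin.toFinset.image mabs) with hT
  have hTne : T.Nonempty := ⟨1, Finset.mem_insert_self _ _⟩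
  set g : G := T.max' hTne with hgdef
  have hg1 : (1 : G) ≤ g := Finset.le_max' T 1 (Finset.mem_insert_self _ _)
  have hgs : ∀ s ∈ Sset, mabs s ≤ g := by
    intro s hs
    exact Finset.le_max' T _ (Finset.mem_insert_of_mem
      (Finset.mem_image_of_mem mabs (hfin.mem_toFinset.2 hs)))
  -- every element is bounded by a power of g
  have hbound : ∀ h : G, ∃ k : ℕ, mabs h ≤ g ^ k := by
    intro h
    have hmem : h ∈ Subgroup.closure Sset := by rw [hclos]; trivial
    induction hmem using Subgroup.closure_induction with
    | mem s hs => exact ⟨1, by rw [pow_one]; exact hgs s hs⟩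
    | one => exact ⟨0, by rw [pow_zero, mabs_one]⟩
    | mul x y hx hy ihx ihy =>
      obtain ⟨k, hk⟩ := ihx
      obtain ⟨l, hl⟩ := ihy
      refine ⟨k + l, mabs_le'.2 ⟨?_, ?_⟩⟩
      · calc x * y ≤ mabs x * mabs y :=
              mul_le_mul' (le_mabs_self x) (le_mabs_self y)
          _ ≤ g ^ k * g ^ l := mul_le_mul' hk hl
          _ = g ^ (k + l) := (pow_add g k l).symm
      · calc (x * y)⁻¹ = y⁻¹ * x⁻¹ := mul_inv_rev x y
          _ ≤ mabs y * mabs x := mul_le_mul' (inv_le_mabs y) (inv_le_mabs x)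
          _ ≤ g ^ l * g ^ k := mul_le_mul' hl hk
          _ = g ^ (k + l) := by rw [← pow_add, add_comm]
    | inv x hx ihx =>
      obtain ⟨k, hk⟩ := ihx
      exact ⟨k, by rwa [mabs_inv]⟩
  -- g > 1 since G is nontrivial
  have hg : (1 : G) < g := by
    rcases hg1.lt_or_eq with h | h
    · exact h
    · exfalso
      obtain ⟨z, hz⟩ := exists_ne (1 : G)
      obtain ⟨k, hk⟩ := hbound z
      rw [← h, one_pow] at hk
      exact absurd hk (not_le.2 (one_lt_mabs.2 hz))
  -- the convex subgroup of elements infinitely smaller than g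
  set C : Subgroup G :=
    { carrier := {x : G | ∀ n : ℕ, mabs x ^ n < g}
      one_mem' := by
        intro n
        simpa [mabs_one] using hg
      inv_mem' := by
        intro x hx n
        rw [mabs_inv]
        exact hx n
      mul_mem' := by
        intro x y hx hy n
        have h1 : mabs (x * y) ≤ (mabs x ⊔ mabs y) * (mabs x ⊔ mabs y) := by
          refine sup_le ?_ ?_
          · exact mul_le_mul' ((le_mabs_self x).trans le_sup_left)
              ((le_mabs_self y).trans le_sup_right)
          · rw [mul_inv_rev]
            exact mul_le_mul' ((inv_le_mabs y).trans le_sup_right)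
              ((inv_le_mabs x).trans le_sup_left)
        have h2 : mabs (x * y) ^ n ≤ (mabs x ⊔ mabs y) ^ (2 * n) := by
          calc mabs (x * y) ^ n ≤ ((mabs x ⊔ mabs y) * (mabs x ⊔ mabs y)) ^ n :=
                pow_le_pow_left' h1 n
            _ = (mabs x ⊔ mabs y) ^ (2 * n) := by rw [← pow_two, ← pow_mul]
        rcases le_total (mabs x) (mabs y) with hxy | hxy
        · rw [sup_eq_right.2 hxy] at h2
          exact h2.trans_lt (hy (2 * n))
        · rw [sup_eq_left.2 hxy] at h2
          exact h2.trans_lt (hx (2 * n)) } with hCdef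
  -- conjugation commutes with mabs
  have hconj_mabs : ∀ h x : G, mabs (h * x * h⁻¹) = h * mabs x * h⁻¹ := by
    intro h x
    have conj_mono : ∀ {u v : G}, u ≤ v → h * u * h⁻¹ ≤ h * v * h⁻¹ :=
      fun huv => mul_le_mul_left (mul_le_mul_right huv h) h⁻¹
    have hinv : (h * x * h⁻¹)⁻¹ = h * x⁻¹ * h⁻¹ := by
      simp [mul_inv_rev, mul_assoc]
    show (h * x * h⁻¹) ⊔ (h * x * h⁻¹)⁻¹ = h * (x ⊔ x⁻¹) * h⁻¹
    rw [hinv]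
    rcases le_total x x⁻¹ with hle | hle
    · rw [sup_eq_right.2 hle, sup_eq_right.2 (conj_mono hle)]
    · rw [sup_eq_left.2 hle, sup_eq_left.2 (conj_mono hle)]
  have hnormal : C.Normal := by
    constructor
    intro x hx h
    show ∀ n : ℕ, mabs (h * x * h⁻¹) ^ n < g
    by_contra hcon
    push_neg at hcon
    obtain ⟨m, hm⟩ := hcon
    rw [hconj_mabs h x, conj_pow] at hm
    -- hm : g ≤ h * mabs x ^ m * h⁻¹
    have hy : h⁻¹ * g * h ≤ mabs x ^ m := by
      have h1 := mul_le_mul_left (mul_le_mul_right hm h⁻¹) h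
      calc h⁻¹ * g * h ≤ h⁻¹ * (h * mabs x ^ m * h⁻¹) * h := h1
        _ = mabs x ^ m := by group
    have hyn : ∀ n : ℕ, (h⁻¹ * g * h) ^ n < g := by
      intro n
      calc (h⁻¹ * g * h) ^ n ≤ (mabs x ^ m) ^ n := pow_le_pow_left' hy n
        _ = mabs x ^ (m * n) := by rw [← pow_mul]
        _ < g := hx (m * n)
    have hgn : ∀ n : ℕ, g ^ n < h * g * h⁻¹ := by
      intro n
      have h5 := hyn n
      rw [show h⁻¹ * g * h = h⁻¹ * g * (h⁻¹)⁻¹ by rw [inv_inv], conj_pow] at h5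
      have h6 := my_mul_lt_right (my_mul_lt_left h5 h) h⁻¹
      calc g ^ n = h * (h⁻¹ * g ^ n * (h⁻¹)⁻¹) * h⁻¹ := by group
        _ < h * g * h⁻¹ := h6
    obtain ⟨k, hk⟩ := hbound h
    have h7 : h * g * h⁻¹ ≤ g ^ k * g * g ^ k :=
      mul_le_mul' (mul_le_mul' ((le_mabs_self h).trans hk) le_rfl)
        ((inv_le_mabs h).trans hk)
    have h8 : g ^ (k + 1 + k) < g ^ (k + 1 + k) := by
      calc g ^ (k + 1 + k) < h * g * h⁻¹ := hgn _
        _ ≤ g ^ k * g * g ^ k := h7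
        _ = g ^ (k + 1 + k) := by rw [pow_add, pow_add, pow_one]
    exact lt_irrefl _ h8
  -- simplicity : C = ⊥
  have hCbot : C = ⊥ := by
    rcases IsSimpleGroup.eq_bot_or_eq_top_of_normal C hnormal with h | h
    · exact h
    · exfalso
      have hgC : g ∈ C := by rw [h]; exact Subgroup.mem_top g
      have := hgC 1
      rw [pow_one, mabs_of_one_le hg1] at this
      exact lt_irrefl _ this
  -- G is archimedean
  have harch : ∀ x : G, 1 < x → ∀ y : G, ∃ n : ℕ, y < x ^ n := by
    intro x hx y
    have hxC : x ∉ C := by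
      rw [hCbot, Subgroup.mem_bot]
      exact hx.ne'
    have hxm : ∃ m : ℕ, g ≤ mabs x ^ m := by
      by_contra hcon
      push_neg at hcon
      exact hxC fun n => hcon n
    obtain ⟨m, hm⟩ := hxm
    rw [mabs_of_one_le hx.le] at hm
    obtain ⟨k, hk⟩ := hbound y
    refine ⟨m * k + 1, ?_⟩
    calc y ≤ mabs y := le_mabs_self y
      _ ≤ g ^ k := hk
      _ ≤ (x ^ m) ^ k := pow_le_pow_left' hm k
      _ = x ^ (m * k) := by rw [← pow_mul]
      _ < x ^ (m * k) * x := lt_mul_of_one_lt_right' _ hx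
      _ = x ^ (m * k + 1) := (pow_succ x (m * k)).symm
  -- final dichotomy : abelian or not
  by_cases hcomm : ∀ a b : G, a * b = b * a
  · -- abelian : simple abelian group would be torsion, impossible in an ordered group
    obtain ⟨z, hz⟩ := exists_ne (1 : G)
    have hx : 1 < mabs z := one_lt_mabs.2 hz
    set x := mabs z with hxdef
    have hHn : (Subgroup.zpowers (x * x)).Normal := by
      constructor
      intro n hn h
      rw [hcomm h n, mul_inv_cancel_right]
      exact hn
    rcases IsSimpleGroup.eq_bot_or_eq_top_of_normal _ hHn with hb | ht
    · have hmem : x * x ∈ Subgroup.zpowers (x * x) := Subgroup.mem_zpowers _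
      rw [hb, Subgroup.mem_bot] at hmem
      have h2 : 1 < x * x := by
        calc (1 : G) = 1 * 1 := (one_mul 1).symm
          _ < x * x := my_mul_lt_of_lt_of_le hx hx.le
      exact absurd hmem h2.ne'
    · have hxH : x ∈ Subgroup.zpowers (x * x) := by
        rw [ht]; exact Subgroup.mem_top x
      obtain ⟨k, hk⟩ := Subgroup.mem_zpowers_iff.1 hxH
      have h1 : x ^ (k + k) = x := by
        rw [zpow_add, ← (Commute.refl x).mul_zpow, hk]
      have h2 : x ^ (k + k - 1) = 1 := by
        have h3 : x ^ (k + k - 1) * x = x := by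
          calc x ^ (k + k - 1) * x = x ^ (k + k - 1) * x ^ (1 : ℤ) := by rw [zpow_one]
            _ = x ^ (k + k) := by rw [← zpow_add, sub_add_cancel]
            _ = x := h1
        have := mul_right_cancel (a := x ^ (k + k - 1)) (b := x) (c := 1)
          (by rw [one_mul]; exact h3)
        exact this
      have hm0 : k + k - 1 ≠ 0 := by omega
      rcases hmk : k + k - 1 with n | n
      · rw [Int.ofNat_eq_natCast] at hmk
        rw [hmk, zpow_natCast] at h2
        have hn0 : n ≠ 0 := by omega
        exact absurd h2 (one_lt_pow' hx hn0).ne'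
      · rw [hmk] at h2
        rw [zpow_negSucc, inv_eq_one] at h2
        exact absurd h2 (one_lt_pow' hx (Nat.succ_ne_zero n)).ne'
  · push_neg at hcomm
    obtain ⟨a₀, b₀, hab⟩ := hcomm
    have hCab : ¬ Commute a₀ b₀ := fun h => hab h.eq
    have hA : ¬ Commute (mabs a₀) (mabs b₀) := by
      intro hcom
      apply hCab
      have h1 : Commute a₀ (mabs b₀) := by
        rcases mabs_choice a₀ with h | h
        · rwa [h] at hcom
        · rw [h] at hcom
          simpa using hcom.inv_left
      rcases mabs_choice b₀ with h | h
      · rwa [h] at h1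
      · rw [h] at h1
        simpa using h1.inv_right
    have ha1 : 1 < mabs a₀ := by
      refine one_lt_mabs.2 fun h => hCab ?_
      rw [h]; exact Commute.one_left b₀
    have hb1 : 1 < mabs b₀ := by
      refine one_lt_mabs.2 fun h => hCab ?_
      rw [h]; exact Commute.one_right a₀
    have hne : mabs a₀ * mabs b₀ ≠ mabs b₀ * mabs a₀ := fun h => hA h
    rcases hne.lt_or_gt with h | h
    · exact holder_contra ha1 hb1 h harch
    · exact holder_contra hb1 ha1 h harch
end

section
/- Let G ≤ Homeo⁺(ℝ) be generated by a family of subgroups {G_n}_{n∈ℤ} ∪ {H_n}_{n∈ℤ} where each G_n acts minimally on the open interval (n, n+1) and fixes its complement pointwise, and each H_n acts minimally on (n − 1/2, n + 1/2) and fixes its complement pointwise. Then the action of G on ℝ is minimal: every G-orbit is dense in ℝ. -/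
/-- If a group of orientation-preserving homeomorphisms of `ℝ` is generated by
subgroups `𝒢 n` acting minimally on `(n, n+1)` and fixing the complement, together
with subgroups `ℋ n` acting minimally on `(n - 1/2, n + 1/2)` and fixing the
complement, then its action on `ℝ` is minimal: every orbit is dense. -/
theorem minimal_action_of_overlapping_minimal_subgroups
    (𝒢 ℋ : ℤ → Subgroup (Equiv.Perm ℝ))
    (hGcont : ∀ n : ℤ, ∀ g ∈ 𝒢 n, Continuous ⇑g ∧ Monotone ⇑g)
    (hHcont : ∀ n : ℤ, ∀ g ∈ ℋ n, Continuous ⇑g ∧ Monotone ⇑g)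
    (hGsupp : ∀ n : ℤ, ∀ g ∈ 𝒢 n, ∀ x : ℝ, x ∉ Set.Ioo (n : ℝ) ((n : ℝ) + 1) → g x = x)
    (hHsupp : ∀ n : ℤ, ∀ g ∈ ℋ n, ∀ x : ℝ,
      x ∉ Set.Ioo ((n : ℝ) - 1/2) ((n : ℝ) + 1/2) → g x = x)
    (hGmin : ∀ n : ℤ, ∀ x ∈ Set.Ioo (n : ℝ) ((n : ℝ) + 1),
      Set.Ioo (n : ℝ) ((n : ℝ) + 1) ⊆ closure {y : ℝ | ∃ g ∈ 𝒢 n, g x = y})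
    (hHmin : ∀ n : ℤ, ∀ x ∈ Set.Ioo ((n : ℝ) - 1/2) ((n : ℝ) + 1/2),
      Set.Ioo ((n : ℝ) - 1/2) ((n : ℝ) + 1/2) ⊆ closure {y : ℝ | ∃ g ∈ ℋ n, g x = y}) :
    ∀ x : ℝ, Dense {y : ℝ | ∃ g ∈ (⨆ n, 𝒢 n) ⊔ (⨆ n, ℋ n), g x = y} := by
  intro x
  set G := (⨆ n, 𝒢 n) ⊔ (⨆ n, ℋ n) with hGdef
  set O : Set ℝ := {y : ℝ | ∃ g ∈ G, g x = y} with hOdef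
  have hGle : ∀ n, 𝒢 n ≤ G := fun n => le_trans (le_iSup 𝒢 n) le_sup_left
  have hHle : ∀ n, ℋ n ≤ G := fun n => le_trans (le_iSup ℋ n) le_sup_right
  have hself : x ∈ O := ⟨1, one_mem G, rfl⟩
  have htrans : ∀ y ∈ O, ∀ g : Equiv.Perm ℝ, g ∈ G → g y ∈ O := by
    rintro y ⟨h, hh, rfl⟩ g hg
    exact ⟨g * h, mul_mem hg hh, rfl⟩
  have keyG : ∀ n : ℤ, ∀ y ∈ O, y ∈ Set.Ioo (n : ℝ) ((n : ℝ) + 1) →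
      Set.Ioo (n : ℝ) ((n : ℝ) + 1) ⊆ closure O := by
    intro n y hy hyI
    refine subset_trans (hGmin n y hyI) (closure_mono ?_)
    rintro z ⟨g, hgm, rfl⟩
    exact htrans y hy g (hGle n hgm)
  have keyH : ∀ n : ℤ, ∀ y ∈ O, y ∈ Set.Ioo ((n : ℝ) - 1/2) ((n : ℝ) + 1/2) →
      Set.Ioo ((n : ℝ) - 1/2) ((n : ℝ) + 1/2) ⊆ closure O := by
    intro n y hy hyI
    refine subset_trans (hHmin n y hyI) (closure_mono ?_)
    rintro z ⟨g, hgm, rfl⟩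
    exact htrans y hy g (hHle n hgm)
  -- from an open interval inside the orbit closure, pick an actual orbit point
  have pick : ∀ a b : ℝ, a < b → Set.Ioo a b ⊆ closure O →
      ∃ y ∈ O, y ∈ Set.Ioo a b := by
    intro a b hab hsub
    have hmem : ((a + b) / 2) ∈ closure O := hsub ⟨by linarith, by linarith⟩
    rcases mem_closure_iff.1 hmem (Set.Ioo a b) isOpen_Ioo ⟨by linarith, by linarith⟩
      with ⟨y, hyI, hyO⟩
    exact ⟨y, hyO, hyI⟩
  -- extend one unit to the right
  have extR : ∀ n : ℤ, Set.Ioo (n : ℝ) ((n : ℝ) + 1) ⊆ closure O →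
      Set.Ioo ((n : ℝ) + 1) ((n : ℝ) + 2) ⊆ closure O := by
    intro n hsub
    obtain ⟨y, hyO, hyI⟩ := pick ((n : ℝ) + 1/2) ((n : ℝ) + 1) (by linarith)
      (fun z hz => hsub ⟨by rcases hz with ⟨h1, h2⟩; linarith, hz.2⟩)
    have hH : Set.Ioo ((↑(n + 1) : ℝ) - 1/2) ((↑(n + 1) : ℝ) + 1/2) ⊆ closure O := by
      refine keyH (n + 1) y hyO ?_
      push_cast
      exact ⟨by rcases hyI with ⟨h1, h2⟩; linarith, by rcases hyI with ⟨h1, h2⟩; linarith⟩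
    obtain ⟨y', hy'O, hy'I⟩ := pick ((n : ℝ) + 1) ((n : ℝ) + 3/2) (by linarith)
      (fun z hz => hH (by push_cast; exact ⟨by rcases hz with ⟨h1, h2⟩; linarith,
        by rcases hz with ⟨h1, h2⟩; linarith⟩))
    have hG : Set.Ioo ((↑(n + 1) : ℝ)) ((↑(n + 1) : ℝ) + 1) ⊆ closure O := by
      refine keyG (n + 1) y' hy'O ?_
      push_cast
      exact ⟨hy'I.1, by rcases hy'I with ⟨h1, h2⟩; linarith⟩
    intro z hz
    exact hG (by push_cast; exact ⟨hz.1, by rcases hz with ⟨h1, h2⟩; linarith⟩)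
  -- extend one unit to the left
  have extL : ∀ n : ℤ, Set.Ioo (n : ℝ) ((n : ℝ) + 1) ⊆ closure O →
      Set.Ioo ((n : ℝ) - 1) ((n : ℝ)) ⊆ closure O := by
    intro n hsub
    obtain ⟨y, hyO, hyI⟩ := pick ((n : ℝ)) ((n : ℝ) + 1/2) (by linarith)
      (fun z hz => hsub ⟨hz.1, by rcases hz with ⟨h1, h2⟩; linarith⟩)
    have hH : Set.Ioo ((n : ℝ) - 1/2) ((n : ℝ) + 1/2) ⊆ closure O :=
      keyH n y hyO ⟨by rcases hyI with ⟨h1, h2⟩; linarith, hyI.2⟩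
    obtain ⟨y', hy'O, hy'I⟩ := pick ((n : ℝ) - 1/2) ((n : ℝ)) (by linarith)
      (fun z hz => hH ⟨hz.1, by rcases hz with ⟨h1, h2⟩; linarith⟩)
    have hG : Set.Ioo ((↑(n - 1) : ℝ)) ((↑(n - 1) : ℝ) + 1) ⊆ closure O := by
      refine keyG (n - 1) y' hy'O ?_
      push_cast
      exact ⟨by rcases hy'I with ⟨h1, h2⟩; linarith, by rcases hy'I with ⟨h1, h2⟩; linarith⟩
    intro z hz
    exact hG (by push_cast; exact ⟨by rcases hz with ⟨h1, h2⟩; linarith,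
      by rcases hz with ⟨h1, h2⟩; linarith⟩)
  -- base: some unit interval with integer endpoints is in the orbit closure
  obtain ⟨n₀, hbase⟩ : ∃ n : ℤ, Set.Ioo (n : ℝ) ((n : ℝ) + 1) ⊆ closure O := by
    rcases lt_or_eq_of_le (Int.floor_le x) with hlt | heq
    · exact ⟨⌊x⌋, keyG ⌊x⌋ x hself ⟨hlt, Int.lt_floor_add_one x⟩⟩
    · set n := ⌊x⌋ with hn
      have hxI : x ∈ Set.Ioo ((n : ℝ) - 1/2) ((n : ℝ) + 1/2) := by
        rw [← heq]; constructor <;> norm_num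
      have hH := keyH n x hself hxI
      obtain ⟨y, hyO, hyI⟩ := pick ((n : ℝ)) ((n : ℝ) + 1/2) (by linarith)
        (fun z hz => hH ⟨by rcases hz with ⟨h1, h2⟩; linarith, hz.2⟩)
      exact ⟨n, keyG n y hyO ⟨hyI.1, by rcases hyI with ⟨h1, h2⟩; linarith⟩⟩
  -- induction: the closure contains Icc (n₀ - k) (n₀ + 1 + k) for all k
  have main : ∀ k : ℕ, Set.Icc ((n₀ : ℝ) - k) ((n₀ : ℝ) + 1 + k) ⊆ closure O := by
    intro k
    induction k with
    | zero =>
      have : Set.Icc ((n₀ : ℝ)) ((n₀ : ℝ) + 1) ⊆ closure O := by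
        rw [← closure_Ioo (by linarith : (n₀ : ℝ) ≠ (n₀ : ℝ) + 1)]
        exact closure_minimal hbase isClosed_closure
      intro z hz
      exact this ⟨by rcases hz with ⟨h1, h2⟩; push_cast at h1 ⊢; linarith,
        by rcases hz with ⟨h1, h2⟩; push_cast at h2 ⊢; linarith⟩
    | succ k ih =>
      -- right extension from integer n₀ + k
      have hR0 : Set.Ioo ((↑(n₀ + (k : ℤ)) : ℝ)) ((↑(n₀ + (k : ℤ)) : ℝ) + 1) ⊆ closure O := by
        intro z hz
        refine ih ⟨?_, ?_⟩ <;> rcases hz with ⟨h1, h2⟩ <;> push_cast at h1 h2 ⊢ <;> linarith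
      have hR := extR (n₀ + (k : ℤ)) hR0
      have hL0 : Set.Ioo ((↑(n₀ - (k : ℤ)) : ℝ)) ((↑(n₀ - (k : ℤ)) : ℝ) + 1) ⊆ closure O := by
        intro z hz
        refine ih ⟨?_, ?_⟩ <;> rcases hz with ⟨h1, h2⟩ <;> push_cast at h1 h2 ⊢ <;> linarith
      have hL := extL (n₀ - (k : ℤ)) hL0
      have hRc : Set.Icc ((n₀ : ℝ) + 1 + k) ((n₀ : ℝ) + 2 + k) ⊆ closure O := by
        have he : Set.Icc ((n₀ : ℝ) + 1 + k) ((n₀ : ℝ) + 2 + k)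
            = closure (Set.Ioo ((↑(n₀ + (k : ℤ)) : ℝ) + 1) ((↑(n₀ + (k : ℤ)) : ℝ) + 2)) := by
          rw [closure_Ioo (by push_cast; linarith)]
          push_cast
          congr 1 <;> ring
        rw [he]
        exact closure_minimal hR isClosed_closure
      have hLc : Set.Icc ((n₀ : ℝ) - (k + 1)) ((n₀ : ℝ) - k) ⊆ closure O := by
        have he : Set.Icc ((n₀ : ℝ) - (k + 1)) ((n₀ : ℝ) - k)
            = closure (Set.Ioo ((↑(n₀ - (k : ℤ)) : ℝ) - 1) ((↑(n₀ - (k : ℤ)) : ℝ))) := by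
          rw [closure_Ioo (by push_cast; linarith)]
          push_cast
          congr 1 <;> ring
        rw [he]
        exact closure_minimal hL isClosed_closure
      intro z hz
      rcases hz with ⟨h1, h2⟩
      push_cast at h1 h2
      rcases le_or_gt z ((n₀ : ℝ) - k) with hc1 | hc1
      · exact hLc ⟨by linarith, hc1⟩
      rcases le_or_gt z ((n₀ : ℝ) + 1 + k) with hc2 | hc2
      · exact ih ⟨le_of_lt hc1, hc2⟩
      · exact hRc ⟨by linarith, by linarith⟩
  -- conclude density
  intro z
  obtain ⟨k, hk⟩ := exists_nat_gt (|z - (n₀ : ℝ)| + 1)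
  have h1 := le_abs_self (z - (n₀ : ℝ))
  have h2 := neg_abs_le (z - (n₀ : ℝ))
  exact main k ⟨by linarith, by linarith⟩
end
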